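/- arXiv:0708.3730 — 7 statements merged into one kernel-verified Lean document; each statement's English description precedes it below -/
import Mathlib

section
/- Let V₁, …, V_d and W be C¹ vector fields on ℝ^e, let f = (f¹, …, f^d) : [0,T] → ℝ^d be C¹, let y : [0,T] → ℝ^e be a solution of the controlled ODE dy = Σᵢ Vᵢ(y) df^i started at y₀, and let J : [0,T] → L(ℝ^e, ℝ^e) be a differentiable path satisfying the backward Jacobian equation J′(t) = −J(t) ∘ (Σ_{i=1}^d (f^i)′(t) (DVᵢ)(y(t))). Then for every t ∈ [0,T] the map t ↦ J(t)(W(y(t))) is differentiable with derivative Σ_{i=1}^d (f^i)′(t) · J(t)([Vᵢ, W](y(t))). -/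
open Set

/-- The Lie bracket of two vector fields on `ℝ^e`:
`[V, W](x) = (DW)(x)(V(x)) − (DV)(x)(W(x))`. -/
noncomputable def lieB {e : ℕ} (V W : (Fin e → ℝ) → (Fin e → ℝ)) (x : Fin e → ℝ) :
    Fin e → ℝ :=
  fderiv ℝ W x (V x) - fderiv ℝ V x (W x)

theorem HasDerivWithinAt.clm_apply_comp {E F G : Type*} [NormedAddCommGroup E] [NormedSpace ℝ E]
    [NormedAddCommGroup F] [NormedSpace ℝ F] [NormedAddCommGroup G] [NormedSpace ℝ G]
    {J : ℝ → F →L[ℝ] G} {J' : F →L[ℝ] G} {W : E → F} {y : ℝ → E} {y' : E} {s : Set ℝ} {t : ℝ}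
    (hJ : HasDerivWithinAt J J' s t) (hW : DifferentiableAt ℝ W (y t))
    (hy : HasDerivWithinAt y y' s t) :
    HasDerivWithinAt (fun u => J u (W (y u))) (J' (W (y t)) + J t (fderiv ℝ W (y t) y')) s t :=
  hJ.clm_apply (hW.hasFDerivAt.comp_hasDerivWithinAt t hy)

theorem neg_comp_sum_fderiv_add_apply_fderiv_sum_eq_sum_lieB {ι : Type*} [Fintype ι] {e : ℕ}
    (V : ι → (Fin e → ℝ) → (Fin e → ℝ)) (W : (Fin e → ℝ) → (Fin e → ℝ))
    (L : (Fin e → ℝ) →L[ℝ] (Fin e → ℝ)) (c : ι → ℝ) (x : Fin e → ℝ) :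
    (-L.comp (∑ i, c i • fderiv ℝ (V i) x)) (W x) + L (fderiv ℝ W x (∑ i, c i • V i x)) =
      ∑ i, c i • L (lieB (V i) W x) := by
  simp only [lieB, neg_apply, ContinuousLinearMap.comp_apply, sum_apply, smul_apply, map_sum,
    map_smul, map_sub, smul_sub, Finset.sum_sub_distrib]
  abel

theorem stmt0_general {d e : ℕ} {T : ℝ}
    (V : Fin d → (Fin e → ℝ) → (Fin e → ℝ)) (W : (Fin e → ℝ) → (Fin e → ℝ))
    (hW : ContDiff ℝ 1 W)
    (f' : ℝ → Fin d → ℝ)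
    (y : ℝ → Fin e → ℝ)
    (hy : ∀ t ∈ Icc (0 : ℝ) T,
      HasDerivWithinAt y (∑ i, f' t i • V i (y t)) (Icc 0 T) t)
    (J : ℝ → (Fin e → ℝ) →L[ℝ] (Fin e → ℝ))
    (hJ : ∀ t ∈ Icc (0 : ℝ) T,
      HasDerivWithinAt J (-(J t).comp (∑ i, f' t i • fderiv ℝ (V i) (y t))) (Icc 0 T) t) :
    ∀ t ∈ Icc (0 : ℝ) T,
      HasDerivWithinAt (fun s => J s (W (y s)))
        (∑ i, f' t i • J t (lieB (V i) W (y t))) (Icc 0 T) t := by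
  intro t ht
  have hWy : DifferentiableAt ℝ W (y t) := hW.differentiable one_ne_zero (y t)
  exact ((hJ t ht).clm_apply_comp hWy (hy t ht)).congr_deriv
    (neg_comp_sum_fderiv_add_apply_fderiv_sum_eq_sum_lieB V W (J t) (f' t) (y t))

/-- Along a solution `y` of the controlled ODE `dy = Σᵢ Vᵢ(y) dfⁱ` and a solution `J` of the
backward Jacobian equation, the map `t ↦ J(t)(W(y(t)))` is differentiable with derivative
`Σᵢ (fⁱ)′(t) • J(t)([Vᵢ, W](y(t)))`. -/
theorem stmt0 {d e : ℕ} (hd : 1 ≤ d) (he : 1 ≤ e) {T : ℝ} (hT : 0 < T)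
    (V : Fin d → (Fin e → ℝ) → (Fin e → ℝ)) (W : (Fin e → ℝ) → (Fin e → ℝ))
    (hV : ∀ i, ContDiff ℝ 1 (V i)) (hW : ContDiff ℝ 1 W)
    (f f' : ℝ → Fin d → ℝ)
    (hf : ∀ t ∈ Icc (0 : ℝ) T, HasDerivWithinAt f (f' t) (Icc 0 T) t)
    (hf' : ContinuousOn f' (Icc 0 T))
    (y₀ : Fin e → ℝ) (y : ℝ → Fin e → ℝ) (hy0 : y 0 = y₀)
    (hy : ∀ t ∈ Icc (0 : ℝ) T,
      HasDerivWithinAt y (∑ i, f' t i • V i (y t)) (Icc 0 T) t)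
    (J : ℝ → (Fin e → ℝ) →L[ℝ] (Fin e → ℝ))
    (hJ : ∀ t ∈ Icc (0 : ℝ) T,
      HasDerivWithinAt J (-(J t).comp (∑ i, f' t i • fderiv ℝ (V i) (y t))) (Icc 0 T) t) :
    ∀ t ∈ Icc (0 : ℝ) T,
      HasDerivWithinAt (fun s => J s (W (y s)))
        (∑ i, f' t i • J t (lieB (V i) W (y t))) (Icc 0 T) t :=
  stmt0_general V W hW f' y hy J hJ
end

section
/- Let V₁, …, V_d and W be C¹ vector fields on ℝ^e, let f = (f¹, …, f^d) : [0,T] → ℝ^d be C¹, let y : [0,T] → ℝ^e be a solution of the controlled ODE dy = Σᵢ Vᵢ(y) df^i started at y₀, and let J : [0,T] → L(ℝ^e, ℝ^e) be a differentiable path with J(0) = id satisfying the backward Jacobian equation J′(t) = −J(t) ∘ (Σ_{i=1}^d (f^i)′(t) (DVᵢ)(y(t))). Then for every t ∈ [0,T]: J(t)(W(y(t))) = W(y₀) + ∫₀ᵗ Σ_{i=1}^d (f^i)′(s) · J(s)([Vᵢ, W](y(s))) ds. -/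
open Set

theorem continuous_lieB {e : ℕ} {V W : (Fin e → ℝ) → (Fin e → ℝ)}
    (hV : ContDiff ℝ 1 V) (hW : ContDiff ℝ 1 W) : Continuous (lieB V W) :=
  ((hW.continuous_fderiv one_ne_zero).clm_apply hV.continuous).sub
    ((hV.continuous_fderiv one_ne_zero).clm_apply hW.continuous)

theorem hasDerivWithinAt_apply_vectorField_lieB {d e : ℕ}
    {V : Fin d → (Fin e → ℝ) → (Fin e → ℝ)} {W : (Fin e → ℝ) → (Fin e → ℝ)}
    {y : ℝ → Fin e → ℝ} {J : ℝ → (Fin e → ℝ) →L[ℝ] (Fin e → ℝ)} {c : Fin d → ℝ}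
    {s : Set ℝ} {t : ℝ} (hW : DifferentiableAt ℝ W (y t))
    (hy : HasDerivWithinAt y (∑ i, c i • V i (y t)) s t)
    (hJ : HasDerivWithinAt J (-(J t).comp (∑ i, c i • fderiv ℝ (V i) (y t))) s t) :
    HasDerivWithinAt (fun u => J u (W (y u))) (∑ i, c i • J t (lieB (V i) W (y t))) s t := by
  have hWy := hW.hasFDerivAt.comp_hasDerivWithinAt t hy
  refine (hJ.clm_apply hWy).congr_deriv ?_
  simp only [lieB, map_sum, map_smul, map_sub, neg_apply,
    ContinuousLinearMap.comp_apply, Function.comp_apply, FunLike.coe_sum, FunLike.coe_smul,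
    Finset.sum_apply, Pi.smul_apply, smul_sub, Finset.sum_sub_distrib]
  abel

theorem intervalIntegral.integral_eq_sub_of_hasDerivWithinAt_Icc {E : Type*}
    [NormedAddCommGroup E] [NormedSpace ℝ E] [CompleteSpace E] {g g' : ℝ → E} {a b : ℝ}
    (hab : a ≤ b) (hderiv : ∀ x ∈ Icc a b, HasDerivWithinAt g (g' x) (Icc a b) x)
    (hg' : ContinuousOn g' (Icc a b)) :
    ∫ x in a..b, g' x = g b - g a :=
  integral_eq_sub_of_hasDeriv_right_of_le hab
    (fun x hx => (hderiv x hx).continuousWithinAt)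
    (fun x hx => ((hderiv x (Ioo_subset_Icc_self hx)).hasDerivAt
      (Icc_mem_nhds hx.1 hx.2)).hasDerivWithinAt)
    (hg'.intervalIntegrable_of_Icc hab)

theorem stmt1_general {d e : ℕ} {T : ℝ}
    (V : Fin d → (Fin e → ℝ) → (Fin e → ℝ)) (W : (Fin e → ℝ) → (Fin e → ℝ))
    (hV : ∀ i, ContDiff ℝ 1 (V i)) (hW : ContDiff ℝ 1 W)
    (f' : ℝ → Fin d → ℝ)
    (hf' : ContinuousOn f' (Icc 0 T))
    (y₀ : Fin e → ℝ) (y : ℝ → Fin e → ℝ) (hy0 : y 0 = y₀)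
    (hy : ∀ t ∈ Icc (0 : ℝ) T,
      HasDerivWithinAt y (∑ i, f' t i • V i (y t)) (Icc 0 T) t)
    (J : ℝ → (Fin e → ℝ) →L[ℝ] (Fin e → ℝ))
    (hJ0 : J 0 = ContinuousLinearMap.id ℝ (Fin e → ℝ))
    (hJ : ∀ t ∈ Icc (0 : ℝ) T,
      HasDerivWithinAt J (-(J t).comp (∑ i, f' t i • fderiv ℝ (V i) (y t))) (Icc 0 T) t) :
    ∀ t ∈ Icc (0 : ℝ) T,
      J t (W (y t)) = W y₀ + ∫ s in (0 : ℝ)..t, ∑ i, f' s i • J s (lieB (V i) W (y s)) := by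
  intro t ht
  have hsub : Icc 0 t ⊆ Icc 0 T := Icc_subset_Icc le_rfl ht.2
  have hderiv : ∀ s ∈ Icc 0 T, HasDerivWithinAt (fun u => J u (W (y u)))
      (∑ i, f' s i • J s (lieB (V i) W (y s))) (Icc 0 T) s := fun s hs =>
    hasDerivWithinAt_apply_vectorField_lieB (hW.differentiable one_ne_zero _) (hy s hs) (hJ s hs)
  have hcont : ContinuousOn (fun s => ∑ i, f' s i • J s (lieB (V i) W (y s))) (Icc 0 T) := by
    have hJc : ContinuousOn J (Icc 0 T) := fun s hs => (hJ s hs).continuousWithinAt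
    have hyc : ContinuousOn y (Icc 0 T) := fun s hs => (hy s hs).continuousWithinAt
    refine continuousOn_finsetSum _ fun i _ => ?_
    exact ((continuous_apply i).comp_continuousOn hf').smul
      (hJc.clm_apply ((continuous_lieB (hV i) hW).comp_continuousOn hyc))
  rw [intervalIntegral.integral_eq_sub_of_hasDerivWithinAt_Icc ht.1
    (fun s hs => (hderiv s (hsub hs)).mono hsub) (hcont.mono hsub)]
  simp [hJ0, hy0]

/-- Along a solution `y` of the controlled ODE `dy = Σᵢ Vᵢ(y) dfⁱ` and a solution `J` of the
backward Jacobian equation with `J(0) = id`, one has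
`J(t)(W(y(t))) = W(y₀) + ∫₀ᵗ Σᵢ (fⁱ)′(s) • J(s)([Vᵢ, W](y(s))) ds`. -/
theorem stmt1 {d e : ℕ} (hd : 1 ≤ d) (he : 1 ≤ e) {T : ℝ} (hT : 0 < T)
    (V : Fin d → (Fin e → ℝ) → (Fin e → ℝ)) (W : (Fin e → ℝ) → (Fin e → ℝ))
    (hV : ∀ i, ContDiff ℝ 1 (V i)) (hW : ContDiff ℝ 1 W)
    (f f' : ℝ → Fin d → ℝ)
    (hf : ∀ t ∈ Icc (0 : ℝ) T, HasDerivWithinAt f (f' t) (Icc 0 T) t)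
    (hf' : ContinuousOn f' (Icc 0 T))
    (y₀ : Fin e → ℝ) (y : ℝ → Fin e → ℝ) (hy0 : y 0 = y₀)
    (hy : ∀ t ∈ Icc (0 : ℝ) T,
      HasDerivWithinAt y (∑ i, f' t i • V i (y t)) (Icc 0 T) t)
    (J : ℝ → (Fin e → ℝ) →L[ℝ] (Fin e → ℝ))
    (hJ0 : J 0 = ContinuousLinearMap.id ℝ (Fin e → ℝ))
    (hJ : ∀ t ∈ Icc (0 : ℝ) T,
      HasDerivWithinAt J (-(J t).comp (∑ i, f' t i • fderiv ℝ (V i) (y t))) (Icc 0 T) t) :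
    ∀ t ∈ Icc (0 : ℝ) T,
      J t (W (y t)) = W y₀ + ∫ s in (0 : ℝ)..t, ∑ i, f' s i • J s (lieB (V i) W (y s)) :=
  stmt1_general V W hV hW f' hf' y₀ y hy0 hy J hJ0 hJ
end

section
/- Let V₁, …, V_d and W be C^∞ vector fields on ℝ^e, let f = (f¹, …, f^d) : [0,T] → ℝ^d be C¹, let y : [0,T] → ℝ^e be a solution of the controlled ODE dy = Σᵢ Vᵢ(y) df^i started at y₀, and let J : [0,T] → L(ℝ^e, ℝ^e) be a differentiable path with J(0) = id satisfying the backward Jacobian equation J′(t) = −J(t) ∘ (Σ_{i=1}^d (f^i)′(t) (DVᵢ)(y(t))). Then for every m ≥ 0 and every t ∈ [0,T]: J(t)(W(y(t))) = W(y₀) + Σ_{k=1}^m Σ_{i₁,…,i_k ∈ {1,…,d}} [V_{i₁}, …, V_{i_k}, W](y₀) · ∫_{0 < r₁ < ⋯ < r_k < t} (f^{i₁})′(r₁) ⋯ (f^{i_k})′(r_k) dr₁ ⋯ dr_k + Σ_{i₀,i₁,…,i_m ∈ {1,…,d}} ∫_{0 < r₀ < r₁ < ⋯ < r_m < t} J(r₀)([V_{i₀},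 V_{i₁}, …, V_{i_m}, W](y(r₀))) · (f^{i₀})′(r₀) ⋯ (f^{i_m})′(r_m) dr₀ ⋯ dr_m. -/
open Set

/-- Iterated Lie brackets: `[V_{i₁}, …, V_{i_k}, W] = [V_{i₁}, [V_{i₂}, …, [V_{i_k}, W]…]]`. -/
noncomputable def iterBracket {d e : ℕ} (V : Fin d → (Fin e → ℝ) → (Fin e → ℝ))
    (W : (Fin e → ℝ) → (Fin e → ℝ)) : List (Fin d) → (Fin e → ℝ) → (Fin e → ℝ)
  | [] => W
  | i :: rest => lieB (V i) (iterBracket V W rest)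

/-- The scalar iterated integral `∫_{0 < r₁ < ⋯ < r_k < t} (f^{i₁})′(r₁) ⋯ (f^{i_k})′(r_k) dr`,
computed by peeling off the outermost variable `r_k`. -/
noncomputable def itInt {d : ℕ} (f' : ℝ → Fin d → ℝ) :
    (k : ℕ) → (Fin k → Fin d) → ℝ → ℝ
  | 0, _, _ => 1
  | k + 1, idx, t =>
      ∫ r in (0 : ℝ)..t, f' r (idx (Fin.last k)) * itInt f' k (fun j => idx j.castSucc) r

/-- The vector-valued iterated integral
`∫_{0 < r₀ < ⋯ < r_k < t} G(r₀) (f^{i₀})′(r₀) ⋯ (f^{i_k})′(r_k) dr`, where the innermost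
integrand carries the vector-valued factor `G(r₀)`. -/
noncomputable def vIt {d e : ℕ} (f' : ℝ → Fin d → ℝ) (G : ℝ → Fin e → ℝ) :
    (k : ℕ) → (Fin (k + 1) → Fin d) → ℝ → Fin e → ℝ
  | 0, idx, t => ∫ r in (0 : ℝ)..t, f' r (idx 0) • G r
  | k + 1, idx, t =>
      ∫ r in (0 : ℝ)..t,
        f' r (idx (Fin.last (k + 1))) • vIt f' G k (fun j => idx j.castSucc) r

section Aux

open MeasureTheory

lemma contDiff_lieB {e : ℕ} {V W : (Fin e → ℝ) → (Fin e → ℝ)} (hV : ContDiff ℝ (⊤ : ℕ∞) V)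
    (hW : ContDiff ℝ (⊤ : ℕ∞) W) : ContDiff ℝ (⊤ : ℕ∞) (lieB V W) :=
  ((hW.fderiv_right (by simp)).clm_apply hV).sub ((hV.fderiv_right (by simp)).clm_apply hW)

lemma intble_of_contOn {T t : ℝ} (ht : t ∈ Icc (0:ℝ) T) {E : Type*} [NormedAddCommGroup E]
    {g : ℝ → E} (hg : ContinuousOn g (Icc 0 T)) : IntervalIntegrable g volume 0 t :=
  (hg.mono (by rw [uIcc_of_le ht.1]; exact Icc_subset_Icc le_rfl ht.2)).intervalIntegrable

lemma primCont {T : ℝ} (hT : 0 ≤ T) {E : Type*} [NormedAddCommGroup E] [NormedSpace ℝ E]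
    {g : ℝ → E} (hg : ContinuousOn g (Icc 0 T)) :
    ContinuousOn (fun t => ∫ r in (0:ℝ)..t, g r) (Icc 0 T) := by
  have h := intervalIntegral.continuousOn_primitive_interval (a := 0) (b := T) (μ := volume)
    (f := g) (by rw [uIcc_of_le hT]; exact hg.integrableOn_Icc)
  rwa [uIcc_of_le hT] at h

lemma keyLemma {d e : ℕ} {T : ℝ}
    (V : Fin d → (Fin e → ℝ) → (Fin e → ℝ)) (hV : ∀ i, ContDiff ℝ (⊤ : ℕ∞) (V i))
    (f' : ℝ → Fin d → ℝ) (hf' : ContinuousOn f' (Icc 0 T))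
    (y : ℝ → Fin e → ℝ)
    (hy : ∀ t ∈ Icc (0:ℝ) T, HasDerivWithinAt y (∑ i, f' t i • V i (y t)) (Icc 0 T) t)
    (J : ℝ → (Fin e → ℝ) →L[ℝ] (Fin e → ℝ))
    (hJ : ∀ t ∈ Icc (0:ℝ) T,
      HasDerivWithinAt J (-(J t).comp (∑ i, f' t i • fderiv ℝ (V i) (y t))) (Icc 0 T) t)
    (Z : (Fin e → ℝ) → (Fin e → ℝ)) (hZ : ContDiff ℝ (⊤ : ℕ∞) Z)
    {t : ℝ} (ht : t ∈ Icc (0:ℝ) T) :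
    J t (Z (y t)) = J 0 (Z (y 0)) +
      ∑ i, ∫ r in (0:ℝ)..t, f' r i • J r (lieB (V i) Z (y r)) := by
  have hycont : ContinuousOn y (Icc 0 T) := fun r hr => (hy r hr).continuousWithinAt
  have hJcont : ContinuousOn J (Icc 0 T) := fun r hr => (hJ r hr).continuousWithinAt
  set g : ℝ → Fin e → ℝ := fun r => J r (Z (y r)) with hgdef
  set g' : ℝ → Fin e → ℝ := fun r => ∑ i, f' r i • J r (lieB (V i) Z (y r)) with hg'def
  have hg : ∀ r ∈ Icc (0:ℝ) T, HasDerivWithinAt g (g' r) (Icc 0 T) r := by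
    intro r hr
    have h1 : HasDerivWithinAt (fun s => Z (y s))
        ((fderiv ℝ Z (y r)) (∑ i, f' r i • V i (y r))) (Icc 0 T) r :=
      (hZ.differentiable (by simp) (y r)).hasFDerivAt.comp_hasDerivWithinAt r (hy r hr)
    have h2 := (hJ r hr).clm_apply h1
    refine h2.congr_deriv ?_
    simp only [hg'def, lieB, map_sub, _root_.map_smul, ContinuousLinearMap.neg_apply,
      ContinuousLinearMap.comp_apply, ContinuousLinearMap.sum_apply,
      ContinuousLinearMap.smul_apply, map_sum, smul_sub, Finset.sum_sub_distrib]
    abel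
  have hterm : ∀ i : Fin d,
      ContinuousOn (fun r => f' r i • J r (lieB (V i) Z (y r))) (Icc 0 T) := fun i =>
    ((continuous_apply i).comp_continuousOn hf').smul
      (hJcont.clm_apply ((contDiff_lieB (hV i) hZ).continuous.comp_continuousOn hycont))
  have hg'cont : ContinuousOn g' (Icc 0 T) :=
    continuousOn_finset_sum _ fun i _ => hterm i
  have hftc : ∫ r in (0:ℝ)..t, g' r = g t - g 0 := by
    apply intervalIntegral.integral_eq_sub_of_hasDeriv_right_of_le ht.1
    · exact ContinuousOn.mono (s := Icc 0 T) (fun r hr => (hg r hr).continuousWithinAt)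
        (Icc_subset_Icc le_rfl ht.2)
    · intro x hx
      have hx' : x ∈ Icc (0:ℝ) T := ⟨hx.1.le, hx.2.le.trans ht.2⟩
      exact ((hg x hx').hasDerivAt
        (Icc_mem_nhds hx.1 (lt_of_lt_of_le hx.2 ht.2))).hasDerivWithinAt
    · exact intble_of_contOn ht hg'cont
  have hswap : ∫ r in (0:ℝ)..t, g' r
      = ∑ i, ∫ r in (0:ℝ)..t, f' r i • J r (lieB (V i) Z (y r)) := by
    rw [hg'def]
    exact intervalIntegral.integral_finset_sum fun i _ => intble_of_contOn ht (hterm i)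
  have : g t = g 0 + ∫ r in (0:ℝ)..t, g' r := by rw [hftc]; abel
  rw [hgdef] at this
  simpa [hswap] using this

lemma itInt_contOn {d : ℕ} {T : ℝ} (hT : 0 ≤ T) {f' : ℝ → Fin d → ℝ}
    (hf' : ContinuousOn f' (Icc 0 T)) :
    ∀ k (idx : Fin k → Fin d), ContinuousOn (itInt f' k idx) (Icc 0 T)
  | 0, _ => by simpa [itInt] using continuousOn_const
  | k + 1, idx => by
      show ContinuousOn (fun t => ∫ r in (0:ℝ)..t, _) (Icc 0 T)
      exact primCont hT (((continuous_apply _).comp_continuousOn hf').mul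
        (itInt_contOn hT hf' k _))

lemma vIt_contOn {d e : ℕ} {T : ℝ} (hT : 0 ≤ T) {f' : ℝ → Fin d → ℝ}
    (hf' : ContinuousOn f' (Icc 0 T)) {G : ℝ → Fin e → ℝ} (hG : ContinuousOn G (Icc 0 T)) :
    ∀ k (idx : Fin (k + 1) → Fin d), ContinuousOn (vIt f' G k idx) (Icc 0 T)
  | 0, idx => by
      show ContinuousOn (fun t => ∫ r in (0:ℝ)..t, _) (Icc 0 T)
      exact primCont hT (((continuous_apply _).comp_continuousOn hf').smul hG)
  | k + 1, idx => by
      show ContinuousOn (fun t => ∫ r in (0:ℝ)..t, _) (Icc 0 T)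
      exact primCont hT (((continuous_apply _).comp_continuousOn hf').smul
        (vIt_contOn hT hf' hG k _))

lemma vIt_zero {d e : ℕ} (f' : ℝ → Fin d → ℝ) (G : ℝ → Fin e → ℝ)
    (idx : Fin 1 → Fin d) (t : ℝ) :
    vIt f' G 0 idx t = ∫ r in (0:ℝ)..t, f' r (idx 0) • G r := rfl

lemma vIt_succ {d e : ℕ} (f' : ℝ → Fin d → ℝ) (G : ℝ → Fin e → ℝ) (k : ℕ)
    (idx : Fin (k + 2) → Fin d) (t : ℝ) :
    vIt f' G (k + 1) idx t
      = ∫ r in (0:ℝ)..t, f' r (idx (Fin.last (k + 1))) • vIt f' G k (fun j => idx j.castSucc) r :=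
  rfl

lemma itInt_succ {d : ℕ} (f' : ℝ → Fin d → ℝ) (k : ℕ) (idx : Fin (k + 1) → Fin d) (t : ℝ) :
    itInt f' (k + 1) idx t
      = ∫ r in (0:ℝ)..t, f' r (idx (Fin.last k)) * itInt f' k (fun j => idx j.castSucc) r :=
  rfl

lemma vIt_cons {d e : ℕ} (f' : ℝ → Fin d → ℝ) (G : ℝ → Fin e → ℝ) (i₀ : Fin d) :
    ∀ (k : ℕ) (idx : Fin (k + 1) → Fin d) (t : ℝ),
      vIt f' G (k + 1) (Fin.cons i₀ idx) t
        = vIt f' (fun r => ∫ s in (0:ℝ)..r, f' s i₀ • G s) k idx t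
  | 0, idx, t => by
      rw [vIt_succ]
      have h1 : (Fin.cons i₀ idx : Fin 2 → Fin d) (Fin.last 1) = idx 0 := rfl
      have h2 : (fun j : Fin 1 => (Fin.cons i₀ idx : Fin 2 → Fin d) j.castSucc)
          = fun _ => i₀ := by funext j; fin_cases j; rfl
      rw [h1, h2, vIt_zero]
      simp only [vIt_zero]
  | k + 1, idx, t => by
      rw [vIt_succ]
      have h1 : (Fin.cons i₀ idx : Fin (k+3) → Fin d) (Fin.last (k + 2))
          = idx (Fin.last (k + 1)) := by rw [← Fin.succ_last, Fin.cons_succ]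
      have h2 : (fun j : Fin (k + 2) => (Fin.cons i₀ idx : Fin (k+3) → Fin d) j.castSucc)
          = (Fin.cons i₀ (fun j : Fin (k + 1) => idx j.castSucc) : Fin (k+2) → Fin d) := by
        funext j
        induction j using Fin.cases with
        | zero => simp
        | succ j' => rw [← Fin.succ_castSucc, Fin.cons_succ, Fin.cons_succ]
      rw [h1, h2, vIt_succ]
      congr 1
      funext r
      rw [vIt_cons f' G i₀ k (fun j => idx j.castSucc) r]

lemma uIcc_sub {T t r : ℝ} (ht : t ∈ Icc (0:ℝ) T) (hr : r ∈ uIcc (0:ℝ) t) :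
    r ∈ Icc (0:ℝ) T := by
  rw [uIcc_of_le ht.1] at hr
  exact ⟨hr.1, hr.2.trans ht.2⟩

lemma vIt_congr {d e : ℕ} {T : ℝ} {f' : ℝ → Fin d → ℝ} {G₁ G₂ : ℝ → Fin e → ℝ}
    (h : ∀ r ∈ Icc (0:ℝ) T, G₁ r = G₂ r) :
    ∀ (k : ℕ) (idx : Fin (k + 1) → Fin d), ∀ t ∈ Icc (0:ℝ) T,
      vIt f' G₁ k idx t = vIt f' G₂ k idx t
  | 0, idx, t, ht => by
    rw [vIt_zero, vIt_zero]
    exact intervalIntegral.integral_congr fun r hr => by rw [h r (uIcc_sub ht hr)]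
  | k + 1, idx, t, ht => by
    rw [vIt_succ, vIt_succ]
    exact intervalIntegral.integral_congr fun r hr => by
      rw [vIt_congr h k _ r (uIcc_sub ht hr)]

lemma vIt_decomp {d e : ℕ} {T : ℝ} (hT : 0 ≤ T) {f' : ℝ → Fin d → ℝ}
    (hf' : ContinuousOn f' (Icc 0 T)) (c : Fin e → ℝ) {G : ℝ → Fin e → ℝ}
    (hG : ContinuousOn G (Icc 0 T)) :
    ∀ (k : ℕ) (idx : Fin (k + 1) → Fin d), ∀ t ∈ Icc (0:ℝ) T,
      vIt f' (fun r => c + G r) k idx t = itInt f' (k + 1) idx t • c + vIt f' G k idx t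
  | 0, idx, t, ht => by
    rw [vIt_zero, vIt_zero, itInt_succ]
    have h1 : (∫ r in (0:ℝ)..t, f' r (idx 0) • (c + G r))
        = (∫ r in (0:ℝ)..t, (f' r (idx 0) • c + f' r (idx 0) • G r)) := by
      congr 1; funext r; rw [smul_add]
    have i1 : IntervalIntegrable (fun r => f' r (idx 0) • c) volume 0 t :=
      intble_of_contOn ht (((continuous_apply _).comp_continuousOn hf').smul continuousOn_const)
    have i2 : IntervalIntegrable (fun r => f' r (idx 0) • G r) volume 0 t :=
      intble_of_contOn ht (((continuous_apply _).comp_continuousOn hf').smul hG)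
    rw [h1, intervalIntegral.integral_add i1 i2, intervalIntegral.integral_smul_const]
    simp [itInt]
  | k + 1, idx, t, ht => by
    rw [vIt_succ, vIt_succ, itInt_succ]
    have h1 : ∀ r ∈ uIcc (0:ℝ) t,
        f' r (idx (Fin.last (k + 1))) • vIt f' (fun s => c + G s) k (fun j => idx j.castSucc) r
          = (f' r (idx (Fin.last (k + 1))) * itInt f' (k + 1) (fun j => idx j.castSucc) r) • c
            + f' r (idx (Fin.last (k + 1))) • vIt f' G k (fun j => idx j.castSucc) r := by
      intro r hr
      rw [vIt_decomp hT hf' c hG k _ r (uIcc_sub ht hr), smul_add, smul_smul]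
    have i1 : IntervalIntegrable
        (fun r => (f' r (idx (Fin.last (k + 1))) * itInt f' (k + 1) (fun j => idx j.castSucc) r) • c)
        volume 0 t :=
      intble_of_contOn ht ((((continuous_apply _).comp_continuousOn hf').mul
        (itInt_contOn hT hf' (k + 1) _)).smul continuousOn_const)
    have i2 : IntervalIntegrable
        (fun r => f' r (idx (Fin.last (k + 1))) • vIt f' G k (fun j => idx j.castSucc) r)
        volume 0 t :=
      intble_of_contOn ht (((continuous_apply _).comp_continuousOn hf').smul
        (vIt_contOn hT hf' hG k _))
    rw [intervalIntegral.integral_congr h1, intervalIntegral.integral_add i1 i2,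
      intervalIntegral.integral_smul_const]

lemma vIt_sum {d e : ℕ} {T : ℝ} (hT : 0 ≤ T) {f' : ℝ → Fin d → ℝ}
    (hf' : ContinuousOn f' (Icc 0 T)) {G : Fin d → ℝ → Fin e → ℝ}
    (hG : ∀ i, ContinuousOn (G i) (Icc 0 T)) :
    ∀ (k : ℕ) (idx : Fin (k + 1) → Fin d), ∀ t ∈ Icc (0:ℝ) T,
      vIt f' (fun r => ∑ i, G i r) k idx t = ∑ i, vIt f' (G i) k idx t
  | 0, idx, t, ht => by
    simp only [vIt_zero, Finset.smul_sum]
    exact intervalIntegral.integral_finset_sum fun i _ =>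
      (intble_of_contOn ht (((continuous_apply _).comp_continuousOn hf').smul (hG i)) :
        IntervalIntegrable (fun r => f' r (idx 0) • G i r) volume 0 t)
  | k + 1, idx, t, ht => by
    simp only [vIt_succ]
    have h1 : ∀ r ∈ uIcc (0:ℝ) t,
        f' r (idx (Fin.last (k + 1))) • vIt f' (fun s => ∑ i, G i s) k (fun j => idx j.castSucc) r
          = ∑ i, f' r (idx (Fin.last (k + 1))) • vIt f' (G i) k (fun j => idx j.castSucc) r := by
      intro r hr
      rw [vIt_sum hT hf' hG k _ r (uIcc_sub ht hr), Finset.smul_sum]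
    rw [intervalIntegral.integral_congr h1]
    exact intervalIntegral.integral_finset_sum fun i _ =>
      (intble_of_contOn ht (((continuous_apply _).comp_continuousOn hf').smul
        (vIt_contOn hT hf' (hG i) k _)) :
        IntervalIntegrable
          (fun r => f' r (idx (Fin.last (k + 1))) • vIt f' (G i) k (fun j => idx j.castSucc) r)
          volume 0 t)

end Aux

/-- Taylor expansion of arbitrary order `m` of `t ↦ J(t)(W(y(t)))` along a solution of the
controlled ODE `dy = Σᵢ Vᵢ(y) dfⁱ`, with iterated-bracket coefficients multiplied by simplex
iterated integrals of the derivatives of `f`, and a remainder of order `m + 1`. -/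
theorem stmt3 {d e : ℕ} (hd : 1 ≤ d) (he : 1 ≤ e) {T : ℝ} (hT : 0 < T)
    (V : Fin d → (Fin e → ℝ) → (Fin e → ℝ)) (W : (Fin e → ℝ) → (Fin e → ℝ))
    (hV : ∀ i, ContDiff ℝ (⊤ : ℕ∞) (V i)) (hW : ContDiff ℝ (⊤ : ℕ∞) W)
    (f f' : ℝ → Fin d → ℝ)
    (hf : ∀ t ∈ Icc (0 : ℝ) T, HasDerivWithinAt f (f' t) (Icc 0 T) t)
    (hf' : ContinuousOn f' (Icc 0 T))
    (y₀ : Fin e → ℝ) (y : ℝ → Fin e → ℝ) (hy0 : y 0 = y₀)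
    (hy : ∀ t ∈ Icc (0 : ℝ) T,
      HasDerivWithinAt y (∑ i, f' t i • V i (y t)) (Icc 0 T) t)
    (J : ℝ → (Fin e → ℝ) →L[ℝ] (Fin e → ℝ))
    (hJ0 : J 0 = ContinuousLinearMap.id ℝ (Fin e → ℝ))
    (hJ : ∀ t ∈ Icc (0 : ℝ) T,
      HasDerivWithinAt J (-(J t).comp (∑ i, f' t i • fderiv ℝ (V i) (y t))) (Icc 0 T) t) :
    ∀ m : ℕ, ∀ t ∈ Icc (0 : ℝ) T,
      J t (W (y t)) =
        W y₀
          + (∑ k ∈ Finset.range m, ∑ idx : Fin (k + 1) → Fin d,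
              itInt f' (k + 1) idx t • iterBracket V W (List.ofFn idx) y₀)
          + ∑ idx : Fin (m + 1) → Fin d,
              vIt f' (fun r => J r (iterBracket V W (List.ofFn idx) (y r))) m idx t := by
  have hT0 : (0:ℝ) ≤ T := hT.le
  have hycont : ContinuousOn y (Icc 0 T) := fun r hr => (hy r hr).continuousWithinAt
  have hJcont : ContinuousOn J (Icc 0 T) := fun r hr => (hJ r hr).continuousWithinAt
  have hBsmooth : ∀ l : List (Fin d), ContDiff ℝ (⊤ : ℕ∞) (iterBracket V W l) := by
    intro l
    induction l with
    | nil => exact hW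
    | cons i rest ih => exact contDiff_lieB (hV i) ih
  have hGcont : ∀ l : List (Fin d),
      ContinuousOn (fun r => J r (iterBracket V W l (y r))) (Icc 0 T) := fun l =>
    hJcont.clm_apply ((hBsmooth l).continuous.comp_continuousOn hycont)
  have hkey : ∀ (l : List (Fin d)), ∀ t ∈ Icc (0:ℝ) T,
      J t (iterBracket V W l (y t)) = iterBracket V W l y₀
        + ∑ i, ∫ r in (0:ℝ)..t, f' r i • J r (iterBracket V W (i :: l) (y r)) := by
    intro l t ht
    have h := keyLemma V hV f' hf' y hy J hJ _ (hBsmooth l) ht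
    rw [hy0, hJ0] at h
    simpa [iterBracket] using h
  intro m
  induction m with
  | zero =>
    intro t ht
    have h := hkey [] t ht
    have hsum : ∑ idx : Fin 1 → Fin d,
        vIt f' (fun r => J r (iterBracket V W (List.ofFn idx) (y r))) 0 idx t
        = ∑ i, ∫ r in (0:ℝ)..t, f' r i • J r (iterBracket V W [i] (y r)) := by
      apply Fintype.sum_equiv (Equiv.funUnique (Fin 1) (Fin d))
      intro idx
      rw [vIt_zero]
      simp [Equiv.funUnique, List.ofFn_succ]
    simp only [iterBracket] at h
    rw [h, hsum]
    simp [iterBracket]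
  | succ m ih =>
    intro t ht
    rw [ih t ht]
    have step : ∀ idx : Fin (m + 1) → Fin d,
        vIt f' (fun r => J r (iterBracket V W (List.ofFn idx) (y r))) m idx t
          = itInt f' (m + 1) idx t • iterBracket V W (List.ofFn idx) y₀
            + ∑ i, vIt f'
                (fun r => J r (iterBracket V W (List.ofFn (Fin.cons i idx : Fin (m+2) → Fin d)) (y r)))
                (m + 1) (Fin.cons i idx) t := by
      intro idx
      set l := List.ofFn idx with hl
      have hHcont : ∀ i : Fin d, ContinuousOn
          (fun r => ∫ s in (0:ℝ)..r, f' s i • J s (iterBracket V W (i :: l) (y s)))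
          (Icc 0 T) := fun i =>
        primCont hT0 (((continuous_apply i).comp_continuousOn hf').smul (hGcont (i :: l)))
      have e1 : vIt f' (fun r => J r (iterBracket V W l (y r))) m idx t
          = vIt f' (fun r => iterBracket V W l y₀
              + ∑ i, ∫ s in (0:ℝ)..r, f' s i • J s (iterBracket V W (i :: l) (y s))) m idx t :=
        vIt_congr (fun r hr => hkey l r hr) m idx t ht
      have e2 := vIt_decomp hT0 hf' (iterBracket V W l y₀)
        (G := fun r => ∑ i, ∫ s in (0:ℝ)..r, f' s i • J s (iterBracket V W (i :: l) (y s)))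
        (continuousOn_finset_sum _ fun i _ => hHcont i) m idx t ht
      have e3 := vIt_sum hT0 hf'
        (G := fun i r => ∫ s in (0:ℝ)..r, f' s i • J s (iterBracket V W (i :: l) (y s)))
        hHcont m idx t ht
      have e4 : ∀ i : Fin d,
          vIt f' (fun r => ∫ s in (0:ℝ)..r, f' s i • J s (iterBracket V W (i :: l) (y s))) m idx t
            = vIt f'
                (fun r => J r (iterBracket V W (List.ofFn (Fin.cons i idx : Fin (m+2) → Fin d)) (y r)))
                (m + 1) (Fin.cons i idx) t := by
        intro i
        have hofn : List.ofFn (Fin.cons i idx : Fin (m+2) → Fin d) = i :: l := by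
          simp [hl, List.ofFn_succ]
        rw [hofn, ← vIt_cons f' (fun s => J s (iterBracket V W (i :: l) (y s))) i m idx t]
      rw [e1, e2, e3]
      congr 1
      exact Finset.sum_congr rfl fun i _ => e4 i
    have reindex : ∑ idx : Fin (m + 2) → Fin d,
        vIt f' (fun r => J r (iterBracket V W (List.ofFn idx) (y r))) (m + 1) idx t
        = ∑ idx : Fin (m + 1) → Fin d, ∑ i : Fin d,
            vIt f' (fun r => J r (iterBracket V W
              (List.ofFn (Fin.cons i idx : Fin (m+2) → Fin d)) (y r))) (m + 1) (Fin.cons i idx) t := by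
      rw [← (Fin.consEquiv fun _ => Fin d).sum_comp
        (fun idx => vIt f' (fun r => J r (iterBracket V W (List.ofFn idx) (y r))) (m + 1) idx t),
        Fintype.sum_prod_type]
      rw [Finset.sum_comm]
      rfl
    rw [Finset.sum_congr rfl fun idx _ => step idx, Finset.sum_add_distrib,
      Finset.sum_range_succ, reindex]
    abel
end

section
/- Let V₁, …, V_d be C¹ vector fields on ℝ^e, let f, h : [0,T] → ℝ^d be C¹ paths, let y : [0,T] → ℝ^e be a solution of the controlled ODE dy = Σᵢ Vᵢ(y) df^i started at y₀, let Φ : [0,T] → L(ℝ^e, ℝ^e) be a differentiable path with Φ(0) = id and Φ′(t) = (Σ_{i=1}^d (f^i)′(t) (DVᵢ)(y(t))) ∘ Φ(t) (the forward Jacobian), and let K : [0,T] → L(ℝ^e, ℝ^e) be a differentiable path with K(0) = id and K′(t) = −K(t) ∘ (Σ_{i=1}^d (f^i)′(t) (DVᵢ)(y(t))) (the backward Jacobian). If v : [0,T] → ℝ^e is differentiable with v(0) = 0 and v′(t) = Σ_{i=1}^d (f^i)′(t) (DVᵢ)(y(t))(v(t)) + Σ_{i=1}^d (h^i)′(t)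 Vᵢ(y(t)) for all t, then for every t ∈ [0,T]: v(t) = Φ(t)( ∫₀ᵗ Σ_{i=1}^d (h^i)′(s) · K(s)(Vᵢ(y(s))) ds ). -/
open Set

/-! Write `A(t) = Σᵢ (fⁱ)′(t) DVᵢ(y(t))` and `g(t) = Σᵢ (hⁱ)′(t) Vᵢ(y(t))`, so that `Φ' = A Φ`,
`K' = -K A` and `v' = A v + g`. Then `K Φ` has zero derivative, hence `K Φ = id`, and in finite
dimension `K(t)` is also a right inverse of `Φ(t)`. Moreover `(K v)' = K g`, so integrating gives
`K(t) v(t) = v(0) + ∫₀ᵗ K g`, and applying `Φ(t)` yields the formula. -/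

theorem ContinuousLinearMap.comp_eq_id_comm {𝕜 E : Type*} [NontriviallyNormedField 𝕜]
    [NormedAddCommGroup E] [NormedSpace 𝕜 E] [FiniteDimensional 𝕜 E] {f g : E →L[𝕜] E} :
    f.comp g = .id 𝕜 E ↔ g.comp f = .id 𝕜 E := by
  simpa only [← ContinuousLinearMap.coe_inj, ContinuousLinearMap.toLinearMap_comp,
    ContinuousLinearMap.coe_id] using LinearMap.comp_eq_id_comm 𝕜 E

section AdjointEquation

variable {E : Type*} [NormedAddCommGroup E] [NormedSpace ℝ E]
  {A Φ K : ℝ → E →L[ℝ] E} {v g : ℝ → E} {a b : ℝ}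

theorem HasDerivWithinAt.clm_apply_of_adjoint {B : E →L[ℝ] E} {w : E} {s : Set ℝ} {t : ℝ}
    (hK : HasDerivWithinAt K (-(K t).comp B) s t) (hv : HasDerivWithinAt v (B (v t) + w) s t) :
    HasDerivWithinAt (fun r => K r (v r)) (K t w) s t := by
  convert hK.clm_apply hv using 1
  simp

theorem clm_comp_eq_of_hasDerivWithinAt_adjoint
    (hΦ : ∀ t ∈ Icc a b, HasDerivWithinAt Φ ((A t).comp (Φ t)) (Icc a b) t)
    (hK : ∀ t ∈ Icc a b, HasDerivWithinAt K (-(K t).comp (A t)) (Icc a b) t) :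
    ∀ t ∈ Icc a b, (K t).comp (Φ t) = (K a).comp (Φ a) := by
  have hKΦ (t) (ht : t ∈ Icc a b) : HasDerivWithinAt (fun r => (K r).comp (Φ r)) 0 (Icc a b) t := by
    convert (hK t ht).clm_comp (hΦ t ht) using 1
    ext
    simp
  exact constant_of_has_deriv_right_zero (fun t ht => (hKΦ t ht).continuousWithinAt) fun t ht =>
    (hKΦ t (Ico_subset_Icc_self ht)).mono_of_mem_nhdsWithin (Icc_mem_nhdsGE_of_mem ht)

theorem integral_clm_apply_eq_sub_of_adjoint [CompleteSpace E]
    (hK : ∀ t ∈ Icc a b, HasDerivWithinAt K (-(K t).comp (A t)) (Icc a b) t)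
    (hv : ∀ t ∈ Icc a b, HasDerivWithinAt v (A t (v t) + g t) (Icc a b) t)
    (hKg : ContinuousOn (fun s => K s (g s)) (Icc a b)) :
    ∀ t ∈ Icc a b, ∫ s in a..t, K s (g s) = K t (v t) - K a (v a) := by
  rintro t ⟨hat, htb⟩
  have hsub : Icc a t ⊆ Icc a b := Icc_subset_Icc_right htb
  have hKv (s) (hs : s ∈ Icc a b) := (hK s hs).clm_apply_of_adjoint (hv s hs)
  refine intervalIntegral.integral_eq_sub_of_hasDeriv_right_of_le hat
    (fun s hs => (hKv s (hsub hs)).continuousWithinAt.mono hsub) (fun s hs => ?_)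
    ((hKg.mono hsub).intervalIntegrable_of_Icc hat)
  have hs' : s ∈ Ioo a b := ⟨hs.1, hs.2.trans_le htb⟩
  exact ((hKv s (Ioo_subset_Icc_self hs')).hasDerivAt (Icc_mem_nhds hs'.1 hs'.2)).hasDerivWithinAt

theorem variation_of_constants [FiniteDimensional ℝ E]
    (hΦa : Φ a = .id ℝ E) (hKa : K a = .id ℝ E)
    (hΦ : ∀ t ∈ Icc a b, HasDerivWithinAt Φ ((A t).comp (Φ t)) (Icc a b) t)
    (hK : ∀ t ∈ Icc a b, HasDerivWithinAt K (-(K t).comp (A t)) (Icc a b) t)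
    (hv : ∀ t ∈ Icc a b, HasDerivWithinAt v (A t (v t) + g t) (Icc a b) t)
    (hKg : ContinuousOn (fun s => K s (g s)) (Icc a b)) :
    ∀ t ∈ Icc a b, v t = Φ t (v a + ∫ s in a..t, K s (g s)) := by
  intro t ht
  have hKΦ : (K t).comp (Φ t) = .id ℝ E := by
    simpa [hΦa, hKa] using clm_comp_eq_of_hasDerivWithinAt_adjoint hΦ hK t ht
  rw [integral_clm_apply_eq_sub_of_adjoint hK hv hKg t ht, hKa, ContinuousLinearMap.id_apply,
    add_sub_cancel, ← ContinuousLinearMap.comp_apply,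
    ContinuousLinearMap.comp_eq_id_comm.1 hKΦ, ContinuousLinearMap.id_apply]

end AdjointEquation

theorem stmt5_general {d e : ℕ} {T : ℝ}
    (V : Fin d → (Fin e → ℝ) → (Fin e → ℝ)) (hV : ∀ i, ContDiff ℝ 1 (V i))
    (f' h' : ℝ → Fin d → ℝ)
    (hh' : ContinuousOn h' (Icc 0 T))
    (y : ℝ → Fin e → ℝ)
    (hy : ∀ t ∈ Icc (0 : ℝ) T,
      HasDerivWithinAt y (∑ i, f' t i • V i (y t)) (Icc 0 T) t)
    (Φ : ℝ → (Fin e → ℝ) →L[ℝ] (Fin e → ℝ))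
    (hΦ0 : Φ 0 = ContinuousLinearMap.id ℝ (Fin e → ℝ))
    (hΦ : ∀ t ∈ Icc (0 : ℝ) T,
      HasDerivWithinAt Φ ((∑ i, f' t i • fderiv ℝ (V i) (y t)).comp (Φ t)) (Icc 0 T) t)
    (K : ℝ → (Fin e → ℝ) →L[ℝ] (Fin e → ℝ))
    (hK0 : K 0 = ContinuousLinearMap.id ℝ (Fin e → ℝ))
    (hK : ∀ t ∈ Icc (0 : ℝ) T,
      HasDerivWithinAt K (-(K t).comp (∑ i, f' t i • fderiv ℝ (V i) (y t))) (Icc 0 T) t)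
    (v : ℝ → Fin e → ℝ) (hv0 : v 0 = 0)
    (hv : ∀ t ∈ Icc (0 : ℝ) T,
      HasDerivWithinAt v
        ((∑ i, f' t i • fderiv ℝ (V i) (y t)) (v t) + ∑ i, h' t i • V i (y t))
        (Icc 0 T) t) :
    ∀ t ∈ Icc (0 : ℝ) T,
      v t = Φ t (∫ s in (0 : ℝ)..t, ∑ i, h' s i • K s (V i (y s))) := by
  set g := fun s => ∑ i, h' s i • V i (y s)
  have hKg (s : ℝ) : K s (g s) = ∑ i, h' s i • K s (V i (y s)) := by simp [g]
  have hg : ContinuousOn g (Icc 0 T) := by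
    have hy_cont : ContinuousOn y (Icc 0 T) := fun s hs => (hy s hs).continuousWithinAt
    exact continuousOn_finsetSum _ fun i _ =>
      ((continuous_apply i).comp_continuousOn hh').smul ((hV i).continuous.comp_continuousOn hy_cont)
  have hK_cont : ContinuousOn K (Icc 0 T) := fun s hs => (hK s hs).continuousWithinAt
  simpa [hv0, hKg] using variation_of_constants hΦ0 hK0 hΦ hK hv (hK_cont.clm_apply hg)

/-- Variation-of-constants representation of the directional derivative of the solution map
of the controlled ODE `dy = Σᵢ Vᵢ(y) dfⁱ` in the direction of a perturbation `h` of the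
driving signal: `v(t) = Φ(t)(∫₀ᵗ Σᵢ (hⁱ)′(s) • K(s)(Vᵢ(y(s))) ds)`. -/
theorem stmt5 {d e : ℕ} (hd : 1 ≤ d) (he : 1 ≤ e) {T : ℝ} (hT : 0 < T)
    (V : Fin d → (Fin e → ℝ) → (Fin e → ℝ)) (hV : ∀ i, ContDiff ℝ 1 (V i))
    (f f' h h' : ℝ → Fin d → ℝ)
    (hf : ∀ t ∈ Icc (0 : ℝ) T, HasDerivWithinAt f (f' t) (Icc 0 T) t)
    (hf' : ContinuousOn f' (Icc 0 T))
    (hh : ∀ t ∈ Icc (0 : ℝ) T, HasDerivWithinAt h (h' t) (Icc 0 T) t)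
    (hh' : ContinuousOn h' (Icc 0 T))
    (y₀ : Fin e → ℝ) (y : ℝ → Fin e → ℝ) (hy0 : y 0 = y₀)
    (hy : ∀ t ∈ Icc (0 : ℝ) T,
      HasDerivWithinAt y (∑ i, f' t i • V i (y t)) (Icc 0 T) t)
    (Φ : ℝ → (Fin e → ℝ) →L[ℝ] (Fin e → ℝ))
    (hΦ0 : Φ 0 = ContinuousLinearMap.id ℝ (Fin e → ℝ))
    (hΦ : ∀ t ∈ Icc (0 : ℝ) T,
      HasDerivWithinAt Φ ((∑ i, f' t i • fderiv ℝ (V i) (y t)).comp (Φ t)) (Icc 0 T) t)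
    (K : ℝ → (Fin e → ℝ) →L[ℝ] (Fin e → ℝ))
    (hK0 : K 0 = ContinuousLinearMap.id ℝ (Fin e → ℝ))
    (hK : ∀ t ∈ Icc (0 : ℝ) T,
      HasDerivWithinAt K (-(K t).comp (∑ i, f' t i • fderiv ℝ (V i) (y t))) (Icc 0 T) t)
    (v : ℝ → Fin e → ℝ) (hv0 : v 0 = 0)
    (hv : ∀ t ∈ Icc (0 : ℝ) T,
      HasDerivWithinAt v
        ((∑ i, f' t i • fderiv ℝ (V i) (y t)) (v t) + ∑ i, h' t i • V i (y t))
        (Icc 0 T) t) :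
    ∀ t ∈ Icc (0 : ℝ) T,
      v t = Φ t (∫ s in (0 : ℝ)..t, ∑ i, h' s i • K s (V i (y s))) :=
  stmt5_general V hV f' h' hh' y hy Φ hΦ0 hΦ K hK0 hK v hv0 hv
end

section
/- Let V₁, …, V_d be C¹ vector fields on ℝ^e, let f = (f¹, …, f^d) : [0,T] → ℝ^d be C¹, and suppose u : ℝ^e × [0,T] → ℝ^e satisfies: u(x, 0) = x for all x; for each x ∈ ℝ^e the map t ↦ u(x, t) is differentiable with ∂ₜu(x, t) = Σ_{i=1}^d (f^i)′(t) Vᵢ(u(x, t)); u is continuous; for each t ∈ [0,T] the map x ↦ u(x, t) is (Fréchet) differentiable; and the derivative D_x u : ℝ^e × [0,T] → L(ℝ^e, ℝ^e) is continuous. Then for each x ∈ ℝ^e the map t ↦ D_x u(x, t) is differentiable on [0,T], with D_x u(x, 0) = id and ∂ₜ D_x u(x, t) = (Σ_{i=1}^d (f^i)′(t) (DVᵢ)(u(x, t))) ∘ D_x u(x, t) for all t; that is, the Jacobian of the flow of the controlled ODE solves the forward variational (linear) ODE. -/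
/-!
With `X(s, y) = Σᵢ (fⁱ)′(s) Vᵢ(y)`, the flow satisfies `u(x, t) = x + ∫₀ᵗ X(s, u(x, s)) ds`.
Since `DVᵢ`, `f′`, `u` and `D_x u` are continuous, the derivative of the integrand in `x` is
bounded on compact sets, so we may differentiate under the integral sign:
`D_x u(x, t) = id + ∫₀ᵗ D_yX(s, u(x, s)) ∘ D_x u(x, s) ds`. The fundamental theorem of calculus
turns this integral equation into the variational equation.
-/

open Set

section Calculus

variable {F : Type*} [NormedAddCommGroup F] [NormedSpace ℝ F] {a b t : ℝ}

theorem hasDerivWithinAt_integral_Icc [CompleteSpace F] {g : ℝ → F}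
    (hg : ContinuousOn g (Icc a b)) (ht : t ∈ Icc a b) :
    HasDerivWithinAt (fun r => ∫ s in a..r, g s) (g t) (Icc a b) t := by
  have : Fact (t ∈ Icc a b) := ⟨ht⟩
  have hint : IntervalIntegrable g MeasureTheory.volume a t :=
    (hg.mono (Icc_subset_Icc le_rfl ht.2)).intervalIntegrable_of_Icc ht.1
  exact intervalIntegral.integral_hasDerivWithinAt_right hint
    ⟨Icc a b, self_mem_nhdsWithin, hg.aestronglyMeasurable measurableSet_Icc⟩ (hg t ht)

theorem eq_add_integral_of_hasDerivWithinAt_Icc [CompleteSpace F] {g g' : ℝ → F}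
    (hg : ∀ s ∈ Icc a b, HasDerivWithinAt g (g' s) (Icc a b) s)
    (hg' : ContinuousOn g' (Icc a b)) (ht : t ∈ Icc a b) :
    g t = g a + ∫ s in a..t, g' s := by
  have hsub : Icc a t ⊆ Icc a b := Icc_subset_Icc le_rfl ht.2
  rw [intervalIntegral.integral_eq_sub_of_hasDerivAt_of_le ht.1
    (fun s hs => (hg s (hsub hs)).continuousWithinAt.mono hsub)
    (fun s hs => (hg s (hsub (Ioo_subset_Icc_self hs))).hasDerivAt
      (Icc_mem_nhds hs.1 (hs.2.trans_le ht.2)))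
    ((hg'.mono hsub).intervalIntegrable_of_Icc ht.1)]
  abel

variable {H : Type*} [NormedAddCommGroup H] [NormedSpace ℝ H] [FiniteDimensional ℝ H]

theorem hasFDerivAt_intervalIntegral_of_continuousOn {Φ : H → ℝ → F} {Ψ : H → ℝ → H →L[ℝ] F}
    (hΦ : ∀ s ∈ Icc a b, ∀ y, HasFDerivAt (Φ · s) (Ψ y s) y)
    (hΦcont : ∀ y, ContinuousOn (Φ y) (Icc a b))
    (hΨcont : ContinuousOn (fun p : H × ℝ => Ψ p.1 p.2) (univ ×ˢ Icc a b))
    (ht : t ∈ Icc a b) (x : H) :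
    HasFDerivAt (fun y => ∫ s in a..t, Φ y s) (∫ s in a..t, Ψ x s) x := by
  have hsub : uIoc a t ⊆ Icc a b := by
    rw [uIoc_of_le ht.1]; exact Ioc_subset_Icc_self.trans (Icc_subset_Icc le_rfl ht.2)
  obtain ⟨C, hC⟩ : ∃ C, ∀ p ∈ Metric.closedBall x 1 ×ˢ Icc a b, ‖Ψ p.1 p.2‖ ≤ C :=
    ((isCompact_closedBall x 1).prod isCompact_Icc).exists_bound_of_continuousOn
      (hΨcont.mono (prod_mono (subset_univ _) subset_rfl))
  refine intervalIntegral.hasFDerivAt_integral_of_dominated_of_fderiv_le (bound := fun _ => C)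
    (Metric.ball_mem_nhds x one_pos)
    (.of_forall fun y => ((hΦcont y).mono hsub).aestronglyMeasurable measurableSet_uIoc)
    ((hΦcont x).mono (Icc_subset_Icc le_rfl ht.2) |>.intervalIntegrable_of_Icc ht.1)
    (((hΨcont.uncurry_left (f := Ψ) x (mem_univ x)).mono hsub).aestronglyMeasurable
      measurableSet_uIoc)
    (.of_forall fun s hs y hy => hC (y, s) ⟨Metric.ball_subset_closedBall hy, hsub hs⟩)
    intervalIntegrable_const
    (.of_forall fun s hs y _ => hΦ s (hsub hs) y)

end Calculus

section Flow

variable {E : Type*} [NormedAddCommGroup E] [NormedSpace ℝ E] {a b : ℝ}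
  {X : ℝ → E → E} {DX : ℝ → E → E →L[ℝ] E} {u : E → ℝ → E} {Du : E → ℝ → E →L[ℝ] E}

theorem fderiv_flow_eq_id_of_initial (hu0 : ∀ x, u x a = x)
    (hDu : ∀ x, HasFDerivAt (u · a) (Du x a) x) (x : E) :
    Du x a = ContinuousLinearMap.id ℝ E :=
  (hDu x).unique <| (funext hu0 : (u · a) = id) ▸ hasFDerivAt_id x

theorem fderiv_flow_eq_id_add_integral [FiniteDimensional ℝ E]
    (hX : ∀ s ∈ Icc a b, ∀ y, HasFDerivAt (X s) (DX s y) y)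
    (hXcont : ContinuousOn (fun p : ℝ × E => X p.1 p.2) (Icc a b ×ˢ univ))
    (hDXcont : ContinuousOn (fun p : ℝ × E => DX p.1 p.2) (Icc a b ×ˢ univ))
    (hu0 : ∀ x, u x a = x)
    (hut : ∀ x, ∀ t ∈ Icc a b, HasDerivWithinAt (u x) (X t (u x t)) (Icc a b) t)
    (hucont : ContinuousOn (fun p : E × ℝ => u p.1 p.2) (univ ×ˢ Icc a b))
    (hDu : ∀ t ∈ Icc a b, ∀ x, HasFDerivAt (u · t) (Du x t) x)
    (hDucont : ContinuousOn (fun p : E × ℝ => Du p.1 p.2) (univ ×ˢ Icc a b))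
    (x : E) {t : ℝ} (ht : t ∈ Icc a b) :
    Du x t = ContinuousLinearMap.id ℝ E + ∫ s in a..t, (DX s (u x s)).comp (Du x s) := by
  have hmaps : MapsTo (fun p : E × ℝ => (p.2, u p.1 p.2)) (univ ×ˢ Icc a b) (Icc a b ×ˢ univ) :=
    fun p hp => ⟨hp.2, mem_univ _⟩
  have hpair : ContinuousOn (fun p : E × ℝ => (p.2, u p.1 p.2)) (univ ×ˢ Icc a b) :=
    continuous_snd.continuousOn.prodMk hucont
  have hXu : ContinuousOn (fun p : E × ℝ => X p.2 (u p.1 p.2)) (univ ×ˢ Icc a b) :=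
    hXcont.comp hpair hmaps
  have hDXu : ContinuousOn (fun p : E × ℝ => (DX p.2 (u p.1 p.2)).comp (Du p.1 p.2))
      (univ ×ˢ Icc a b) :=
    (hDXcont.comp hpair hmaps).clm_comp hDucont
  have hrep : (u · t) = fun y => y + ∫ s in a..t, X s (u y s) := funext fun y => by
    rw [eq_add_integral_of_hasDerivWithinAt_Icc (hut y)
      (hXu.uncurry_left (f := fun y s => X s (u y s)) y (mem_univ y)) ht, hu0]
  refine (hDu t ht x).unique ?_
  rw [hrep]
  exact (hasFDerivAt_id x).add <| hasFDerivAt_intervalIntegral_of_continuousOn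
    (Ψ := fun y s => (DX s (u y s)).comp (Du y s))
    (fun s hs y => (hX s hs (u y s)).comp y (hDu s hs y))
    (fun y => hXu.uncurry_left (f := fun y s => X s (u y s)) y (mem_univ y)) hDXu ht x

theorem hasDerivWithinAt_fderiv_flow [FiniteDimensional ℝ E]
    (hX : ∀ s ∈ Icc a b, ∀ y, HasFDerivAt (X s) (DX s y) y)
    (hXcont : ContinuousOn (fun p : ℝ × E => X p.1 p.2) (Icc a b ×ˢ univ))
    (hDXcont : ContinuousOn (fun p : ℝ × E => DX p.1 p.2) (Icc a b ×ˢ univ))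
    (hu0 : ∀ x, u x a = x)
    (hut : ∀ x, ∀ t ∈ Icc a b, HasDerivWithinAt (u x) (X t (u x t)) (Icc a b) t)
    (hucont : ContinuousOn (fun p : E × ℝ => u p.1 p.2) (univ ×ˢ Icc a b))
    (hDu : ∀ t ∈ Icc a b, ∀ x, HasFDerivAt (u · t) (Du x t) x)
    (hDucont : ContinuousOn (fun p : E × ℝ => Du p.1 p.2) (univ ×ˢ Icc a b))
    (x : E) {t : ℝ} (ht : t ∈ Icc a b) :
    HasDerivWithinAt (Du x) ((DX t (u x t)).comp (Du x t)) (Icc a b) t := by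
  have hDXu : ContinuousOn (fun s => (DX s (u x s)).comp (Du x s)) (Icc a b) :=
    (hDXcont.comp (continuous_id.continuousOn.prodMk
      (hucont.uncurry_left (f := u) x (mem_univ x))) fun s hs => ⟨hs, mem_univ _⟩).clm_comp
      (hDucont.uncurry_left (f := Du) x (mem_univ x))
  exact ((hasDerivWithinAt_integral_Icc hDXu ht).const_add _).congr
    (fun r hr => fderiv_flow_eq_id_add_integral hX hXcont hDXcont hu0 hut hucont hDu hDucont x hr)
    (fderiv_flow_eq_id_add_integral hX hXcont hDXcont hu0 hut hucont hDu hDucont x ht)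

end Flow

section ControlledField

variable {ι E F : Type*} [Fintype ι] [NormedAddCommGroup F] [NormedSpace ℝ F]

theorem hasFDerivAt_controlledField [NormedAddCommGroup E] [NormedSpace ℝ E] {V : ι → E → F}
    (hV : ∀ i, Differentiable ℝ (V i)) (c : ι → ℝ) (y : E) :
    HasFDerivAt (fun y => ∑ i, c i • V i y) (∑ i, c i • fderiv ℝ (V i) y) y :=
  .fun_sum fun i _ => (hV i y).hasFDerivAt.const_smul (c i)

theorem continuousOn_controlledField [TopologicalSpace E] {W : ι → E → F}
    (hW : ∀ i, Continuous (W i)) {c : ℝ → ι → ℝ} {S : Set ℝ} (hc : ContinuousOn c S) :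
    ContinuousOn (fun p : ℝ × E => ∑ i, c p.1 i • W i p.2) (S ×ˢ univ) :=
  continuousOn_finsetSum _ fun i _ =>
    ((continuous_apply i).comp_continuousOn (hc.comp continuous_fst.continuousOn
      fun _ hp => hp.1)).smul ((hW i).comp continuous_snd).continuousOn

end ControlledField

theorem stmt7_general {d e : ℕ} {T : ℝ} (hT : 0 < T)
    (V : Fin d → (Fin e → ℝ) → (Fin e → ℝ)) (hV : ∀ i, ContDiff ℝ 1 (V i))
    (f' : ℝ → Fin d → ℝ)
    (hf' : ContinuousOn f' (Icc 0 T))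
    (u : (Fin e → ℝ) → ℝ → Fin e → ℝ)
    (hu0 : ∀ x, u x 0 = x)
    (hut : ∀ x, ∀ t ∈ Icc (0 : ℝ) T,
      HasDerivWithinAt (u x) (∑ i, f' t i • V i (u x t)) (Icc 0 T) t)
    (hucont : ContinuousOn (fun p : (Fin e → ℝ) × ℝ => u p.1 p.2)
      (univ ×ˢ Icc (0 : ℝ) T))
    (Du : (Fin e → ℝ) → ℝ → (Fin e → ℝ) →L[ℝ] (Fin e → ℝ))
    (hDu : ∀ t ∈ Icc (0 : ℝ) T, ∀ x, HasFDerivAt (fun x => u x t) (Du x t) x)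
    (hDucont : ContinuousOn (fun p : (Fin e → ℝ) × ℝ => Du p.1 p.2)
      (univ ×ˢ Icc (0 : ℝ) T)) :
    ∀ x : Fin e → ℝ,
      Du x 0 = ContinuousLinearMap.id ℝ (Fin e → ℝ) ∧
      ∀ t ∈ Icc (0 : ℝ) T,
        HasDerivWithinAt (fun t => Du x t)
          ((∑ i, f' t i • fderiv ℝ (V i) (u x t)).comp (Du x t)) (Icc 0 T) t := by
  intro x
  have hX (s : ℝ) (_ : s ∈ Icc (0 : ℝ) T) :=
    hasFDerivAt_controlledField (fun i => (hV i).differentiable one_ne_zero) (f' s)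
  refine ⟨fderiv_flow_eq_id_of_initial hu0 (hDu 0 ⟨le_rfl, hT.le⟩) x, fun t ht => ?_⟩
  exact hasDerivWithinAt_fderiv_flow hX
    (continuousOn_controlledField (fun i => (hV i).continuous) hf')
    (continuousOn_controlledField (fun i => (hV i).continuous_fderiv one_ne_zero) hf')
    hu0 hut hucont hDu hDucont x ht

/-- The Jacobian `D_x u(x, t)` of the flow `u(x, ·)` of the controlled ODE
`∂ₜ u(x,t) = Σᵢ (fⁱ)′(t) Vᵢ(u(x,t))` satisfies the forward variational (linear) ODE
`∂ₜ D_x u(x, t) = (Σᵢ (fⁱ)′(t) (DVᵢ)(u(x,t))) ∘ D_x u(x, t)` with `D_x u(x, 0) = id`. -/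
theorem stmt7 {d e : ℕ} (hd : 1 ≤ d) (he : 1 ≤ e) {T : ℝ} (hT : 0 < T)
    (V : Fin d → (Fin e → ℝ) → (Fin e → ℝ)) (hV : ∀ i, ContDiff ℝ 1 (V i))
    (f f' : ℝ → Fin d → ℝ)
    (hf : ∀ t ∈ Icc (0 : ℝ) T, HasDerivWithinAt f (f' t) (Icc 0 T) t)
    (hf' : ContinuousOn f' (Icc 0 T))
    (u : (Fin e → ℝ) → ℝ → Fin e → ℝ)
    (hu0 : ∀ x, u x 0 = x)
    (hut : ∀ x, ∀ t ∈ Icc (0 : ℝ) T,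
      HasDerivWithinAt (u x) (∑ i, f' t i • V i (u x t)) (Icc 0 T) t)
    (hucont : ContinuousOn (fun p : (Fin e → ℝ) × ℝ => u p.1 p.2)
      (univ ×ˢ Icc (0 : ℝ) T))
    (Du : (Fin e → ℝ) → ℝ → (Fin e → ℝ) →L[ℝ] (Fin e → ℝ))
    (hDu : ∀ t ∈ Icc (0 : ℝ) T, ∀ x, HasFDerivAt (fun x => u x t) (Du x t) x)
    (hDucont : ContinuousOn (fun p : (Fin e → ℝ) × ℝ => Du p.1 p.2)
      (univ ×ˢ Icc (0 : ℝ) T)) :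
    ∀ x : Fin e → ℝ,
      Du x 0 = ContinuousLinearMap.id ℝ (Fin e → ℝ) ∧
      ∀ t ∈ Icc (0 : ℝ) T,
        HasDerivWithinAt (fun t => Du x t)
          ((∑ i, f' t i • fderiv ℝ (V i) (u x t)).comp (Du x t)) (Icc 0 T) t :=
  stmt7_general hT V hV f' hf' u hu0 hut hucont Du hDu hDucont
end

section
/- In the tensor algebra A = TensorAlgebra ℝ (ℝ^d), for every k ≥ 1 and every function i : {1, …, k} → {1, …, d}: π_k( Σ_{S ⊆ {1,…,k}} (−1)^{k − |S|} · E_k(𝟙_S(1) · e_{i(1)}) * E_k(𝟙_S(2) · e_{i(2)}) * ⋯ * E_k(𝟙_S(k) · e_{i(k)}) ) = ι(e_{i(1)}) * ι(e_{i(2)}) * ⋯ * ι(e_{i(k)}), where the sum is over all subsets S of {1, …, k}, |S| is the cardinality of S, and 𝟙_S(j) equals 1 if j ∈ S and 0 otherwise. -/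
open TensorAlgebra

/-- The truncated exponential `E_N(v) = Σ_{m=0}^{N} (1/m!) ι(v)^m` in the tensor algebra. -/
noncomputable def truncExp {d : ℕ} (N : ℕ) (v : Fin d → ℝ) :
    TensorAlgebra ℝ (Fin d → ℝ) :=
  ∑ m ∈ Finset.range (N + 1), ((m.factorial : ℝ))⁻¹ • TensorAlgebra.ι ℝ v ^ m

/-- The projection onto the degree-`m` homogeneous component of the tensor algebra, for its
standard grading in which `ι(ℝ^d)` is the degree-1 component. -/
noncomputable def degProj (d m : ℕ) :
    TensorAlgebra ℝ (Fin d → ℝ) →ₗ[ℝ] TensorAlgebra ℝ (Fin d → ℝ) :=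
  GradedAlgebra.proj
    (fun n : ℕ =>
      LinearMap.range (TensorAlgebra.ι ℝ : (Fin d → ℝ) →ₗ[ℝ] TensorAlgebra ℝ (Fin d → ℝ)) ^ n)
    m

/-! By multilinearity of the ordered product, the signed sum over `S` is the inclusion–exclusion
expansion of `∏ⱼ (E_k(e_{i j}) - 1)`. Each factor `E_k(e) - 1` has components only in degrees
`1, …, k`, so when the product is expanded, every term except the one taking the degree-1 part
`ι(e_{i j})` from each factor has degree greater than `k` and is killed by `π_k`. -/

section InclusionExclusion

variable {R A : Type*} [CommRing R] [Ring A] [Algebra R A]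

theorem List.prod_ofFn_sub_one {k : ℕ} (a : Fin k → A) :
    (List.ofFn fun j => a j - 1).prod =
      ∑ S : Finset (Fin k), (-1 : R) ^ (k - S.card) •
        (List.ofFn fun j => if j ∈ S then a j else 1).prod := by
  let P := MultilinearMap.mkPiAlgebraFin R k A
  have hsplit : (fun j => a j - 1) = a + fun _ => (-1 : R) • 1 := by
    funext j; simp [sub_eq_add_neg]
  calc (List.ofFn fun j => a j - 1).prod
      = ∑ S : Finset (Fin k), P (S.piecewise a fun _ => (-1 : R) • 1) := by
        rw [hsplit, ← P.map_add_univ]; rfl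
    _ = _ := by
      refine Finset.sum_congr rfl fun S _ => ?_
      have hpiece : S.piecewise a (fun _ => (-1 : R) • 1) =
          Sᶜ.piecewise (fun j => (-1 : R) • S.piecewise a 1 j) (S.piecewise a 1) := by
        funext j; by_cases hj : j ∈ S <;> simp [hj]
      rw [hpiece, P.map_piecewise_smul, Finset.prod_const, Finset.card_compl,
        Fintype.card_fin]
      rfl

end InclusionExclusion

section Graded

variable {R A : Type*} [CommSemiring R] [Semiring A] [Algebra R A]
  (𝒜 : ℕ → Submodule R A) [GradedAlgebra 𝒜]

theorem GradedAlgebra.proj_list_prod_ofFn_sum {k : ℕ} (t : Finset ℕ) (ht₀ : ∀ n ∈ t, 1 ≤ n)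
    (ht₁ : 1 ∈ t) (y : Fin k → ℕ → A) (hy : ∀ j n, y j n ∈ 𝒜 n) :
    GradedAlgebra.proj 𝒜 k (List.ofFn fun j => ∑ n ∈ t, y j n).prod =
      (List.ofFn fun j => y j 1).prod := by
  have hmem : ∀ r : Fin k → ℕ, (List.ofFn fun j => y j (r j)).prod ∈ 𝒜 (∑ j, r j) := by
    intro r
    rw [← List.sum_ofFn]
    exact SetLike.list_prod_ofFn_mem_graded _ _ fun j => hy j (r j)
  change GradedAlgebra.proj 𝒜 k (MultilinearMap.mkPiAlgebraFin R k A fun j => ∑ n ∈ t, y j n) = _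
  rw [MultilinearMap.map_sum_finset, map_sum]
  refine (Finset.sum_eq_single_of_mem (fun _ => 1) (Fintype.mem_piFinset.2 fun _ => ht₁)
    fun r hr hr1 => ?_).trans ?_
  · have hpos : ∀ j, 1 ≤ r j := fun j => ht₀ _ (Fintype.mem_piFinset.1 hr j)
    obtain ⟨j₀, hj₀⟩ : ∃ j, 1 < r j := by
      by_contra! h
      exact hr1 (funext fun j => le_antisymm (h j) (hpos j))
    have hdeg : k < ∑ j, r j :=
      calc k = ∑ _j : Fin k, 1 := by simp
        _ < ∑ j, r j := Finset.sum_lt_sum (fun j _ => hpos j) ⟨j₀, Finset.mem_univ _, hj₀⟩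
    exact DirectSum.decompose_of_mem_ne 𝒜 (hmem r) hdeg.ne'
  · have h := hmem fun _ => 1
    simp only [Finset.sum_const, Finset.card_univ, Fintype.card_fin, smul_eq_mul,
      mul_one] at h
    exact DirectSum.decompose_of_mem_same 𝒜 h

end Graded

theorem truncExp_zero {d : ℕ} (N : ℕ) : truncExp (d := d) N 0 = 1 := by
  rw [truncExp, Finset.sum_range_succ']
  simp

theorem truncExp_sub_one {d : ℕ} (N : ℕ) (v : Fin d → ℝ) :
    truncExp N v - 1 = ∑ n ∈ Finset.Icc 1 N, ((n.factorial : ℝ))⁻¹ • TensorAlgebra.ι ℝ v ^ n := by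
  rw [truncExp, Finset.range_eq_Ico, Finset.sum_eq_sum_Ico_succ_bot N.succ_pos]
  simp [Finset.Ico_add_one_right_eq_Icc]

theorem stmt9_general {d : ℕ} (k : ℕ) (hk : 1 ≤ k) (i : Fin k → Fin d) :
    degProj d k
      (∑ S : Finset (Fin k), (-1 : ℝ) ^ (k - S.card) •
        (List.ofFn fun j : Fin k =>
          truncExp k (if j ∈ S then Pi.single (i j) (1 : ℝ) else 0)).prod) =
    (List.ofFn fun j : Fin k => TensorAlgebra.ι ℝ (Pi.single (i j) (1 : ℝ))).prod := by
  have hsummand : ∀ (S : Finset (Fin k)) j,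
      truncExp k (if j ∈ S then Pi.single (i j) (1 : ℝ) else 0) =
        if j ∈ S then truncExp k (Pi.single (i j) (1 : ℝ)) else 1 := by
    intro S j; split_ifs <;> simp [truncExp_zero]
  simp_rw [hsummand, ← List.prod_ofFn_sub_one, truncExp_sub_one]
  refine (GradedAlgebra.proj_list_prod_ofFn_sum _ (Finset.Icc 1 k)
    (fun n hn => (Finset.mem_Icc.1 hn).1) (Finset.mem_Icc.2 ⟨le_rfl, hk⟩) _
    fun j n => Submodule.smul_mem _ _ <|
      Submodule.pow_mem_pow _ (LinearMap.mem_range_self _ _) n).trans ?_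
  simp only [Nat.factorial_one, Nat.cast_one, inv_one, one_smul, pow_one]

/-- Inclusion–exclusion over subsets `S ⊆ {1, …, k}` of products of truncated exponentials of
(indicator-scaled) basis vectors recovers, at tensor level `k`, the monomial
`ι(e_{i(1)}) * ⋯ * ι(e_{i(k)})`. -/
theorem stmt9 {d : ℕ} (hd : 1 ≤ d) (k : ℕ) (hk : 1 ≤ k) (i : Fin k → Fin d) :
    degProj d k
      (∑ S : Finset (Fin k), (-1 : ℝ) ^ (k - S.card) •
        (List.ofFn fun j : Fin k =>
          truncExp k (if j ∈ S then Pi.single (i j) (1 : ℝ) else 0)).prod) =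
    (List.ofFn fun j : Fin k => TensorAlgebra.ι ℝ (Pi.single (i j) (1 : ℝ))).prod :=
  stmt9_general k hk i
end

section
/- Let V₁, …, V_d be C^∞ vector fields on ℝ^e, let y₀ ∈ ℝ^e and let r ≥ 1. Then the following two linear subspaces of ℝ^e coincide: (i) the span of { V_w(y₀) : w a word over {1, …, d} of length 1 ≤ |w| ≤ r } (the Hörmander span (H)_r); and (ii) the span of { Σ_{w ∈ {1,…,d}^{k−1}} ⟨E_{k−1}(v₁) * ⋯ * E_{k−1}(v_j)⟩_w · [V_{w₁}, …, V_{w_{k−1}}, Vᵢ](y₀) : 1 ≤ k ≤ r, 1 ≤ i ≤ d, j ∈ ℕ, v₁, …, v_j ∈ ℝ^d } (the Hörmander-type span (HT)_r), where for k = 1 the summand is understood to be Vᵢ(y₀) itself. In particular, Hörmander's condition, i.e. that (i) equals ℝ^e for some r, holds at y₀ if and only if the Hörmander-type condition, i.e. that (ii) equals ℝ^e for some r, holds at y₀. -/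
open TensorAlgebra

/-- The coordinate `⟨x⟩_w` of an element `x` of the tensor algebra of `ℝ^d` with respect to
the monomial basis `{ι(e_{w₁}) * ⋯ * ι(e_{w_m}) : w a word over {1, …, d}}` built from the
standard basis `e₁, …, e_d` of `ℝ^d`. -/
noncomputable def coeffW {d : ℕ} (x : TensorAlgebra ℝ (Fin d → ℝ)) (w : List (Fin d)) : ℝ :=
  ((Pi.basisFun ℝ (Fin d)).tensorAlgebra.repr x) (FreeMonoid.ofList w)

/-- The Hörmander span (H)_r at `y₀`: the span of all `V_w(y₀)` for words `w` over
`{1, …, d}` with `1 ≤ |w| ≤ r`. Here a word of length `k + 1 ≤ r` is encoded as a prefix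
`w : Fin k → Fin d` together with a last letter `i : Fin d`. -/
noncomputable def spanH {d e : ℕ} (V : Fin d → (Fin e → ℝ) → (Fin e → ℝ))
    (y₀ : Fin e → ℝ) (r : ℕ) : Submodule ℝ (Fin e → ℝ) :=
  Submodule.span ℝ
    {u : Fin e → ℝ |
      ∃ k : ℕ, k < r ∧ ∃ w : Fin k → Fin d, ∃ i : Fin d,
        u = iterBracket V (V i) (List.ofFn w) y₀}

/-- The Hörmander-type span (HT)_r at `y₀`: the span of the vectors
`Σ_{w ∈ {1,…,d}^{k}} ⟨E_k(v₁) * ⋯ * E_k(v_j)⟩_w • [V_{w₁}, …, V_{w_k}, Vᵢ](y₀)` for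
`k + 1 ≤ r`, `i ∈ {1, …, d}`, and group-like elements `E_k(v₁) * ⋯ * E_k(v_j)`. -/
noncomputable def spanHT {d e : ℕ} (V : Fin d → (Fin e → ℝ) → (Fin e → ℝ))
    (y₀ : Fin e → ℝ) (r : ℕ) : Submodule ℝ (Fin e → ℝ) :=
  Submodule.span ℝ
    {u : Fin e → ℝ |
      ∃ k : ℕ, k < r ∧ ∃ i : Fin d, ∃ j : ℕ, ∃ v : Fin j → (Fin d → ℝ),
        u = ∑ w : Fin k → Fin d,
          coeffW ((List.ofFn fun t : Fin j => truncExp k (v t)).prod) (List.ofFn w) •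
            iterBracket V (V i) (List.ofFn w) y₀}

noncomputable def mono (l : List (Fin d)) : TensorAlgebra ℝ (Fin d → ℝ) :=
  (l.map fun a => TensorAlgebra.ι ℝ ((Pi.basisFun ℝ (Fin d)) a)).prod

noncomputable def Phi (d : ℕ) : TensorAlgebra ℝ (Fin d → ℝ) ≃ₐ[ℝ] MonoidAlgebra ℝ (FreeMonoid (Fin d)) :=
  (TensorAlgebra.equivFreeAlgebra (Pi.basisFun ℝ (Fin d))).trans FreeAlgebra.equivMonoidAlgebraFreeMonoid

lemma coeffW_eq_Phi (x : TensorAlgebra ℝ (Fin d → ℝ)) (w : List (Fin d)) :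
    coeffW x w = (Phi d x).coeff (FreeMonoid.ofList w) := by
  rw [coeffW, Module.Basis.tensorAlgebra_repr_apply, FreeAlgebra.basisFreeMonoid, Module.Basis.map_repr]
  simp [Phi]

lemma Phi_mono (l : List (Fin d)) :
    Phi d (mono l) = MonoidAlgebra.single (FreeMonoid.ofList l) 1 := by
  induction l with
  | nil =>
      show Phi d 1 = _
      rw [map_one]; rfl
  | cons a l ih =>
      show Phi d (TensorAlgebra.ι ℝ ((Pi.basisFun ℝ (Fin d)) a) * mono l) = _
      rw [map_mul, ih]
      have h1 : Phi d (TensorAlgebra.ι ℝ ((Pi.basisFun ℝ (Fin d)) a)) =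
          MonoidAlgebra.single (FreeMonoid.of a) 1 := by
        rw [Phi, AlgEquiv.trans_apply, TensorAlgebra.equivFreeAlgebra_ι_apply,
          FreeAlgebra.equivMonoidAlgebraFreeMonoid]
        simp
      rw [h1, MonoidAlgebra.single_mul_single, one_mul]
      rfl

lemma coeffW_mono (l w : List (Fin d)) :
    coeffW (mono l) w = if w = l then 1 else 0 := by
  rw [coeffW_eq_Phi, Phi_mono]
  by_cases h : w = l
  · subst h; simp [MonoidAlgebra.coeff_single, Finsupp.single_eq_same]
  · rw [if_neg h]
    have : FreeMonoid.ofList l ≠ FreeMonoid.ofList w := fun hc => h (FreeMonoid.ofList.injective hc).symm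
    exact Finsupp.single_eq_of_ne' this

lemma repr_eq_Phi (x : TensorAlgebra ℝ (Fin d → ℝ)) :
    ((Pi.basisFun ℝ (Fin d)).tensorAlgebra.repr x : FreeMonoid (Fin d) →₀ ℝ) = (Phi d x).coeff :=
  Finsupp.ext fun m => coeffW_eq_Phi x (FreeMonoid.toList m)

lemma basis_ta_ofList (l : List (Fin d)) :
    (Pi.basisFun ℝ (Fin d)).tensorAlgebra (FreeMonoid.ofList l) = mono l := by
  apply (Phi d).injective
  rw [Phi_mono]
  apply MonoidAlgebra.coeff_injective
  rw [MonoidAlgebra.coeff_single, ← repr_eq_Phi, Module.Basis.repr_self]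

lemma mono_append (l m : List (Fin d)) : mono (l ++ m) = mono l * mono m := by
  simp [mono, List.prod_append]

noncomputable def coeffL (u : List (Fin d)) : TensorAlgebra ℝ (Fin d → ℝ) →ₗ[ℝ] ℝ :=
  (Finsupp.lapply (FreeMonoid.ofList u)) ∘ₗ
    ((Pi.basisFun ℝ (Fin d)).tensorAlgebra.repr :
      TensorAlgebra ℝ (Fin d → ℝ) →ₗ[ℝ] (FreeMonoid (Fin d) →₀ ℝ))

lemma coeffL_apply (x : TensorAlgebra ℝ (Fin d → ℝ)) (u : List (Fin d)) :
    coeffL u x = coeffW x u := rfl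

lemma coeffW_mul_mono (l u : List (Fin d)) (x : TensorAlgebra ℝ (Fin d → ℝ)) :
    coeffW (mono l * x) u =
      if u.take l.length = l then coeffW x (u.drop l.length) else 0 := by
  have hF : (coeffL u ∘ₗ LinearMap.mulLeft ℝ (mono l)) =
      (if u.take l.length = l then coeffL (u.drop l.length) else 0) := by
    apply Module.Basis.ext (Pi.basisFun ℝ (Fin d)).tensorAlgebra
    intro m
    rw [show m = FreeMonoid.ofList (FreeMonoid.toList m) from rfl, basis_ta_ofList]
    by_cases h : u.take l.length = l
    · rw [if_pos h]
      simp only [LinearMap.comp_apply, LinearMap.mulLeft_apply, coeffL_apply]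
      rw [← mono_append, coeffW_mono, coeffW_mono]
      by_cases h2 : u = l ++ FreeMonoid.toList m
      · rw [if_pos h2, h2]
        simp [List.drop_left]
      · rw [if_neg h2, if_neg]
        intro hc
        apply h2
        conv_lhs => rw [← List.take_append_drop l.length u, h, hc]
    · rw [if_neg h]
      simp only [LinearMap.comp_apply, LinearMap.mulLeft_apply, coeffL_apply,
        LinearMap.zero_apply]
      rw [← mono_append, coeffW_mono, if_neg]
      intro hc
      exact h (by rw [hc, List.take_left])
  have := LinearMap.congr_fun hF x
  simpa only [LinearMap.comp_apply, LinearMap.mulLeft_apply, coeffL_apply,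
    apply_ite (fun f : TensorAlgebra ℝ (Fin d → ℝ) →ₗ[ℝ] ℝ => f x), LinearMap.zero_apply] using this

lemma mono_replicate (m : ℕ) (a : Fin d) :
    mono (List.replicate m a) = (TensorAlgebra.ι ℝ ((Pi.basisFun ℝ (Fin d)) a)) ^ m := by
  simp [mono, List.map_replicate, List.prod_replicate]

lemma truncExp_sub_one_s11 (k : ℕ) (a : Fin d) :
    truncExp k ((Pi.basisFun ℝ (Fin d)) a) - 1 =
      ∑ m ∈ Finset.Icc 1 k, ((m.factorial : ℝ))⁻¹ • mono (List.replicate m a) := by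
  have hrange : Finset.range (k + 1) = insert 0 (Finset.Icc 1 k) := by
    ext n; simp; omega
  rw [truncExp, hrange, Finset.sum_insert (by simp)]
  simp only [Nat.factorial_zero, Nat.cast_one, inv_one, pow_zero, one_smul]
  rw [add_sub_cancel_left]
  exact Finset.sum_congr rfl fun m _ => by rw [mono_replicate]

lemma keyB (k : ℕ) : ∀ (p u : List (Fin d)), p.length ≤ k → u.length ≤ p.length →
    coeffW ((p.map fun a => truncExp k ((Pi.basisFun ℝ (Fin d)) a) - 1).prod) u
      = if u = p then 1 else 0 := by
  intro p
  induction p with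
  | nil =>
      intro u _ hu
      have hu0 : u = [] := List.eq_nil_of_length_eq_zero (Nat.le_zero.mp hu)
      subst hu0
      rw [show ((List.map (fun a => truncExp k ((Pi.basisFun ℝ (Fin d)) a) - 1) []).prod) =
        mono [] from rfl, coeffW_mono]
  | cons a p ih =>
      intro u hp hu
      have hk : 1 ≤ k := by simp at hp; omega
      rw [List.map_cons, List.prod_cons, truncExp_sub_one_s11, Finset.sum_mul]
      have hsum : ∀ X : TensorAlgebra ℝ (Fin d → ℝ), ∀ s : Finset ℕ,
          ∀ f : ℕ → TensorAlgebra ℝ (Fin d → ℝ),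
          coeffW (∑ m ∈ s, f m) u = ∑ m ∈ s, coeffW (f m) u := by
        intro X s f
        rw [← coeffL_apply, map_sum]
        rfl
      rw [hsum 0]
      have hterm : ∀ m ∈ Finset.Icc 1 k,
          coeffW ((((m.factorial : ℝ))⁻¹ • mono (List.replicate m a)) *
              (List.map (fun a => truncExp k ((Pi.basisFun ℝ (Fin d)) a) - 1) p).prod) u
            = if m = 1 ∧ u = a :: p then 1 else 0 := by
        intro m hm
        have hm1 : 1 ≤ m := (Finset.mem_Icc.mp hm).1
        rw [smul_mul_assoc, ← coeffL_apply, map_smul, coeffL_apply, coeffW_mul_mono]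
        rw [List.length_replicate]
        by_cases h1 : u.take m = List.replicate m a
        · rw [if_pos h1]
          have hmlen : m ≤ u.length := by
            have := congrArg List.length h1
            simp [List.length_take] at this
            omega
          have hdlen : (u.drop m).length ≤ p.length := by
            simp [List.length_drop]
            simp at hu
            omega
          rw [ih _ (by simp at hp; omega) hdlen]
          by_cases h2 : u.drop m = p
          · have hlen : u.length = p.length + m := by
              have := congrArg List.length h2
              simp [List.length_drop] at this
              omega
            have hm2 : m = 1 := by simp at hu; omega
            subst hm2
            have huu : u = a :: p := by
              conv_lhs => rw [← List.take_append_drop 1 u, h1, h2]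
              simp
            rw [if_pos h2, if_pos ⟨rfl, huu⟩]
            simp
          · rw [if_neg h2, if_neg]
            · simp
            · rintro ⟨hm2, huu⟩
              subst hm2 huu
              simp at h2
        · rw [if_neg h1, if_neg]
          · simp
          · rintro ⟨hm2, huu⟩
            subst hm2 huu
            simp at h1
      rw [Finset.sum_congr rfl hterm]
      by_cases hq : u = a :: p
      · rw [if_pos hq]
        have : ∀ m ∈ Finset.Icc 1 k, (if m = 1 ∧ u = a :: p then (1:ℝ) else 0)
            = if m = 1 then 1 else 0 := fun m _ => by simp [hq]
        rw [Finset.sum_congr rfl this, Finset.sum_ite_eq' (Finset.Icc 1 k) 1 (fun _ => (1:ℝ))]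
        simp [hk]
      · rw [if_neg hq]
        apply Finset.sum_eq_zero
        intro m _
        simp [hq]

variable {d : ℕ}

/-- The generating set of products of truncated exponentials. -/
def genG (d k : ℕ) : Set (TensorAlgebra ℝ (Fin d → ℝ)) :=
  {x | ∃ j : ℕ, ∃ v : Fin j → (Fin d → ℝ),
    x = (List.ofFn fun t : Fin j => truncExp k (v t)).prod}

lemma one_mem_genG (k : ℕ) : (1 : TensorAlgebra ℝ (Fin d → ℝ)) ∈ genG d k :=
  ⟨0, Fin.elim0, by simp⟩

lemma mul_truncExp_span (k : ℕ) (v₀ : Fin d → ℝ) {x : TensorAlgebra ℝ (Fin d → ℝ)}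
    (hx : x ∈ Submodule.span ℝ (genG d k)) :
    truncExp k v₀ * x ∈ Submodule.span ℝ (genG d k) := by
  induction hx using Submodule.span_induction with
  | mem x hx =>
      rcases hx with ⟨j, v, rfl⟩
      apply Submodule.subset_span
      refine ⟨j + 1, Fin.cons v₀ v, ?_⟩
      rw [List.ofFn_succ, List.prod_cons]
      simp [Fin.cons_zero, Fin.cons_succ]
  | zero => simp
  | add x y _ _ hx hy => rw [mul_add]; exact add_mem hx hy
  | smul c x _ hx => rw [mul_smul_comm]; exact Submodule.smul_mem _ _ hx

lemma prodEsub_mem_span (k : ℕ) : ∀ p : List (Fin d),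
    ((p.map fun a => truncExp k ((Pi.basisFun ℝ (Fin d)) a) - 1).prod) ∈
      Submodule.span ℝ (genG d k) := by
  intro p
  induction p with
  | nil => simpa using Submodule.subset_span (one_mem_genG (d := d) k)
  | cons a p ih =>
      rw [List.map_cons, List.prod_cons, sub_mul, one_mul]
      exact sub_mem (mul_truncExp_span k _ ih) ih

lemma sum_coeff_mem_spanHT {e : ℕ} (V : Fin d → (Fin e → ℝ) → (Fin e → ℝ))
    (y₀ : Fin e → ℝ) (r k : ℕ) (hk : k < r) (i : Fin d)
    {X : TensorAlgebra ℝ (Fin d → ℝ)} (hX : X ∈ Submodule.span ℝ (genG d k)) :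
    (∑ w' : Fin k → Fin d, coeffW X (List.ofFn w') • iterBracket V (V i) (List.ofFn w') y₀)
      ∈ spanHT V y₀ r := by
  induction hX using Submodule.span_induction with
  | mem x hx =>
      rcases hx with ⟨j, v, rfl⟩
      exact Submodule.subset_span ⟨k, hk, i, j, v, rfl⟩
  | zero =>
      have h0 : ∀ w' : Fin k → Fin d, coeffW (0 : TensorAlgebra ℝ (Fin d → ℝ)) (List.ofFn w') = 0 :=
        fun w' => by rw [← coeffL_apply, map_zero]
      simp only [h0, zero_smul, Finset.sum_const_zero]
      exact zero_mem _
  | add x y _ _ hx hy =>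
      have hadd : ∀ w' : Fin k → Fin d,
          coeffW (x + y) (List.ofFn w') = coeffW x (List.ofFn w') + coeffW y (List.ofFn w') :=
        fun w' => by rw [← coeffL_apply, map_add]; rfl
      simp only [hadd, add_smul, Finset.sum_add_distrib]
      exact add_mem hx hy
  | smul c x _ hx =>
      have hs : ∀ w' : Fin k → Fin d,
          coeffW (c • x) (List.ofFn w') = c * coeffW x (List.ofFn w') :=
        fun w' => by rw [← coeffL_apply, map_smul]; rfl
      simp only [hs, mul_smul, ← Finset.smul_sum]
      exact Submodule.smul_mem _ _ hx

lemma spanH_eq_spanHT {e : ℕ} (V : Fin d → (Fin e → ℝ) → (Fin e → ℝ))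
    (y₀ : Fin e → ℝ) (r : ℕ) : spanH V y₀ r = spanHT V y₀ r := by
  apply le_antisymm
  · rw [spanH, Submodule.span_le]
    rintro u ⟨k, hk, w, i, rfl⟩
    have hX := prodEsub_mem_span (d := d) k (List.ofFn w)
    have hkey : ∀ w' : Fin k → Fin d,
        coeffW (((List.ofFn w).map fun a => truncExp k ((Pi.basisFun ℝ (Fin d)) a) - 1).prod)
          (List.ofFn w') = if w' = w then 1 else 0 := by
      intro w'
      rw [keyB k (List.ofFn w) (List.ofFn w') (by simp) (by simp)]
      simp [List.ofFn_inj]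
    have hmem := sum_coeff_mem_spanHT V y₀ r k hk i hX
    simp only [hkey] at hmem
    have hcollapse :
        (∑ w' : Fin k → Fin d, (if w' = w then (1:ℝ) else 0) • iterBracket V (V i) (List.ofFn w') y₀)
          = iterBracket V (V i) (List.ofFn w) y₀ := by
      rw [Finset.sum_eq_single w]
      · simp
      · intro b _ hb; rw [if_neg hb, zero_smul]
      · intro h; exact absurd (Finset.mem_univ w) h
    rwa [hcollapse] at hmem
  · rw [spanHT, Submodule.span_le]
    rintro u ⟨k, hk, i, j, v, rfl⟩
    exact Submodule.sum_mem _ fun w _ =>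
      Submodule.smul_mem _ _ (Submodule.subset_span ⟨k, hk, w, i, rfl⟩)

/-- For every `r ≥ 1` the Hörmander span (H)_r coincides with the Hörmander-type span
(HT)_r; in particular Hörmander's condition holds at `y₀` iff the Hörmander-type condition
holds at `y₀`. -/
theorem stmt11 {d e : ℕ} (hd : 1 ≤ d) (he : 1 ≤ e)
    (V : Fin d → (Fin e → ℝ) → (Fin e → ℝ)) (hV : ∀ i, ContDiff ℝ (⊤ : ℕ∞) (V i))
    (y₀ : Fin e → ℝ) (r : ℕ) (hr : 1 ≤ r) :
    spanH V y₀ r = spanHT V y₀ r ∧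
      ((∃ r' : ℕ, 1 ≤ r' ∧ spanH V y₀ r' = ⊤) ↔
        (∃ r' : ℕ, 1 ≤ r' ∧ spanHT V y₀ r' = ⊤)) := by
  refine ⟨spanH_eq_spanHT V y₀ r, ?_⟩
  constructor
  · rintro ⟨r', hr', h⟩
    exact ⟨r', hr', by rw [← spanH_eq_spanHT, h]⟩
  · rintro ⟨r', hr', h⟩
    exact ⟨r', hr', by rw [spanH_eq_spanHT, h]⟩
end
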